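/- arXiv:2004.04284 — 3 statements merged into one kernel-verified Lean document; each statement's English description precedes it below -/
import Mathlib

section
/- Let W ⊂ ℝⁿ be open and convex, and let h : W → ℝ be continuous and locally concave (every point of W has a neighborhood on which h is concave). Then h is concave on W. -/
/-!
Restrict to a segment `[x, y] ⊆ W` and subtract the chord: the resulting function of `t ∈ [0, 1]`
is continuous, vanishes at both ends and is locally concave. At the smallest point where it
attains its minimum, local concavity gives `φ (τ - s) + φ (τ + s) ≤ 2 φ τ` for small `s > 0`,
so `τ - s` would be a smaller minimum point; hence `τ` is an endpoint and the minimum is `0`.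
-/

open Set Filter Topology AffineMap

theorem ConcaveOn.exists_add_le_two_mul {φ : ℝ → ℝ} {U V : Set ℝ} {τ : ℝ}
    (hφ : ConcaveOn ℝ U φ) (hU : U ∈ 𝓝 τ) (hV : V ∈ 𝓝 τ) :
    ∃ s > 0, τ - s ∈ V ∧ τ + s ∈ V ∧ φ (τ - s) + φ (τ + s) ≤ 2 * φ τ := by
  have hsub : Tendsto (fun s => τ - s) (𝓝[>] 0) (𝓝 τ) := by
    simpa using ((continuous_sub_left τ).tendsto 0).mono_left nhdsWithin_le_nhds
  have hadd : Tendsto (fun s => τ + s) (𝓝[>] 0) (𝓝 τ) := by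
    simpa using ((continuous_const_add τ).tendsto 0).mono_left nhdsWithin_le_nhds
  have hUV := inter_mem hU hV
  obtain ⟨s, hs, ⟨hsU, hsV⟩, haU, haV⟩ :=
    (eventually_mem_nhdsWithin.and ((hsub.eventually_mem hUV).and (hadd.eventually_mem hUV))).exists
  have hmid := hφ.2 hsU haU (by norm_num : (0 : ℝ) ≤ 1 / 2) (by norm_num : (0 : ℝ) ≤ 1 / 2)
    (by norm_num)
  have hτ : (1 / 2 : ℝ) • (τ - s) + (1 / 2 : ℝ) • (τ + s) = τ := by simp only [smul_eq_mul]; ring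
  rw [hτ, smul_eq_mul, smul_eq_mul] at hmid
  exact ⟨s, hs, hsV, haV, by linarith⟩

theorem min_le_of_locally_concaveOn_Icc {φ : ℝ → ℝ} {a b : ℝ} (hφ : ContinuousOn φ (Icc a b))
    (hloc : ∀ t ∈ Ioo a b, ∃ U ∈ 𝓝 t, ConcaveOn ℝ U φ) {t : ℝ} (ht : t ∈ Icc a b) :
    min (φ a) (φ b) ≤ φ t := by
  obtain ⟨m, hm, hmin⟩ := isCompact_Icc.exists_isMinOn ⟨t, ht⟩ hφ
  set A := Icc a b ∩ φ ⁻¹' {φ m}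
  have hA : IsCompact A := isCompact_Icc.of_isClosed_subset
    (hφ.preimage_isClosed_of_isClosed isClosed_Icc isClosed_singleton) inter_subset_left
  obtain ⟨τ, ⟨hτ, hτm⟩, hτleast⟩ := hA.exists_isLeast ⟨m, hm, rfl⟩
  have hτ_not_mem : τ ∉ Ioo a b := by
    intro hτ'
    obtain ⟨U, hU, hφU⟩ := hloc τ hτ'
    obtain ⟨s, hs, hs₁, hs₂, hle⟩ := hφU.exists_add_le_two_mul hU (Icc_mem_nhds hτ'.1 hτ'.2)
    have h₁ : φ m ≤ φ (τ - s) := hmin hs₁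
    have h₂ : φ m ≤ φ (τ + s) := hmin hs₂
    have : τ - s ∈ A := ⟨hs₁, by simp only [mem_preimage, mem_singleton_iff] at hτm ⊢; linarith⟩
    linarith [hτleast this]
  have hend : φ a = φ m ∨ φ b = φ m := by
    rcases eq_or_lt_of_le hτ.1 with rfl | ha
    · exact .inl hτm
    rcases eq_or_lt_of_le hτ.2 with rfl | hb
    · exact .inr hτm
    exact absurd ⟨ha, hb⟩ hτ_not_mem
  calc min (φ a) (φ b) ≤ φ m := by rcases hend with h | h <;> simp [h]
    _ ≤ φ t := hmin ht

theorem lineMap_le_of_locally_concaveOn_Icc {φ : ℝ → ℝ} (hφ : ContinuousOn φ (Icc 0 1))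
    (hloc : ∀ t ∈ Ioo 0 1, ∃ U ∈ 𝓝 t, ConcaveOn ℝ U φ) {t : ℝ} (ht : t ∈ Icc 0 1) :
    lineMap (φ 0) (φ 1) t ≤ φ t := by
  set ℓ : ℝ →ᵃ[ℝ] ℝ := lineMap (φ 0) (φ 1)
  have hmin := min_le_of_locally_concaveOn_Icc (φ := φ - ℓ) (hφ.sub lineMap_continuous.continuousOn)
    (fun t ht => ?_) ht
  · simpa [ℓ] using hmin
  obtain ⟨U, hU, hφU⟩ := hloc t ht
  exact ⟨U, hU, hφU.sub (((convexOn_id convex_univ).comp_affineMap ℓ).subset (subset_univ U) hφU.1)⟩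

theorem concaveOn_of_locally_concaveOn {E : Type*} [AddCommGroup E] [Module ℝ E]
    [TopologicalSpace E] [IsTopologicalAddGroup E] [ContinuousSMul ℝ E] {s : Set E} {f : E → ℝ}
    (hs : Convex ℝ s) (hf : ContinuousOn f s) (hloc : ∀ p ∈ s, ∃ U ∈ 𝓝 p, ConcaveOn ℝ U f) :
    ConcaveOn ℝ s f := by
  refine ⟨hs, fun x hx y hy a b ha hb hab => ?_⟩
  have hseg : MapsTo (lineMap x y) (Icc (0 : ℝ) 1) s := fun t ht => hs.lineMap_mem hx hy ht
  have hchord := lineMap_le_of_locally_concaveOn_Icc (φ := f ∘ lineMap x y)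
    (hf.comp (lineMap_continuous (R := ℝ)).continuousOn hseg) (fun t ht => ?_)
    (show b ∈ Icc 0 1 from ⟨hb, by linarith⟩)
  · obtain rfl : a = 1 - b := by linarith
    simpa [lineMap_apply_ring, lineMap_apply_module] using hchord
  obtain ⟨U, hU, hfU⟩ := hloc _ (hseg (Ioo_subset_Icc_self ht))
  exact ⟨_, lineMap_continuous.continuousAt hU, hfU.comp_affineMap _⟩

theorem stmt5_general (n : ℕ) (W : Set (EuclideanSpace ℝ (Fin n)))
    (hWc : Convex ℝ W) (h : EuclideanSpace ℝ (Fin n) → ℝ)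
    (hcont : ContinuousOn h W)
    (hloc : ∀ p ∈ W, ∃ r > 0, Metric.ball p r ⊆ W ∧ ConcaveOn ℝ (Metric.ball p r) h) :
    ConcaveOn ℝ W h :=
  concaveOn_of_locally_concaveOn hWc hcont fun p hp =>
    let ⟨_, hr, _, hconc⟩ := hloc p hp
    ⟨_, Metric.ball_mem_nhds p hr, hconc⟩

/-- A continuous, locally concave function on an open convex set
W ⊂ ℝⁿ is concave on W. -/
theorem stmt5 (n : ℕ) (W : Set (EuclideanSpace ℝ (Fin n))) (hWo : IsOpen W)
    (hWc : Convex ℝ W) (h : EuclideanSpace ℝ (Fin n) → ℝ)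
    (hcont : ContinuousOn h W)
    (hloc : ∀ p ∈ W, ∃ r > 0, Metric.ball p r ⊆ W ∧ ConcaveOn ℝ (Metric.ball p r) h) :
    ConcaveOn ℝ W h :=
  stmt5_general n W hWc h hcont hloc
end

section
/- Let q be a C² function near r = 2 with q(2) = 0, q'(2) < 0 and q''(2) + (1/2)q'(2) > 0, and let α ∈ (0, 1/2). Then for r < 2 sufficiently close to 2, where q > 0, one has (q^α)'(r) < 0 and (q^α)''(r) < 0. -/
/-!
Where `q > 0` the chain rule gives `(q^α)' = α q^{α-1} q'` and
`(q^α)'' = α q^{α-2} ((α - 1) q'² + q q'')`, so the signs of the two derivatives are those of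
`q'` and of the bracket. At `r = 2` the bracket equals `(α - 1) q'(2)² < 0` because `q(2) = 0`
and `α < 1`, and `q'(2) < 0`; since `q'` and the bracket are continuous, both signs persist
to the left of `2`.
-/

open Filter Topology Set

section RpowConst

variable {f : ℝ → ℝ} {p x : ℝ}

theorem deriv_rpow_const_eventuallyEq (hf : ∀ᶠ y in 𝓝 x, DifferentiableAt ℝ f y ∧ 0 < f y) :
    (deriv fun y => f y ^ p) =ᶠ[𝓝 x] fun y => deriv f y * p * f y ^ (p - 1) :=
  hf.mono fun _ hy => deriv_rpow_const hy.1 (Or.inl hy.2.ne')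

theorem deriv_deriv_rpow_const (hf : ∀ᶠ y in 𝓝 x, DifferentiableAt ℝ f y ∧ 0 < f y)
    (hf' : DifferentiableAt ℝ (deriv f) x) :
    deriv (deriv fun y => f y ^ p) x =
      p * f x ^ (p - 2) * ((p - 1) * deriv f x ^ 2 + f x * deriv (deriv f) x) := by
  obtain ⟨hdiff, hpos⟩ := hf.self_of_nhds
  have hpow : HasDerivAt (fun y => f y ^ (p - 1)) (deriv f x * (p - 1) * f x ^ (p - 2)) x := by
    simpa only [sub_sub, one_add_one_eq_two] using
      hdiff.hasDerivAt.rpow_const (p := p - 1) (Or.inl hpos.ne')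
  rw [(deriv_rpow_const_eventuallyEq hf).deriv_eq, ((hf'.hasDerivAt.mul_const p).fun_mul hpow).deriv,
    show p - 1 = p - 2 + 1 by ring, Real.rpow_add_one hpos.ne']
  ring

theorem deriv_rpow_const_neg (hp : 0 < p) (hf : DifferentiableAt ℝ f x) (hfx : 0 < f x)
    (hf' : deriv f x < 0) : deriv (fun y => f y ^ p) x < 0 := by
  rw [deriv_rpow_const hf (Or.inl hfx.ne')]
  exact mul_neg_of_neg_of_pos (mul_neg_of_neg_of_pos hf' hp) (Real.rpow_pos_of_pos hfx _)

theorem deriv_deriv_rpow_const_neg (hp : 0 < p)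
    (hf : ∀ᶠ y in 𝓝 x, DifferentiableAt ℝ f y ∧ 0 < f y) (hf' : DifferentiableAt ℝ (deriv f) x)
    (hbracket : (p - 1) * deriv f x ^ 2 + f x * deriv (deriv f) x < 0) :
    deriv (deriv fun y => f y ^ p) x < 0 := by
  rw [deriv_deriv_rpow_const hf hf']
  exact mul_neg_of_pos_of_neg (mul_pos hp (Real.rpow_pos_of_pos hf.self_of_nhds.2 _)) hbracket

end RpowConst

theorem ContDiff.eventually_deriv_neg_and_bracket_neg {f : ℝ → ℝ} {a p : ℝ} (hf : ContDiff ℝ 2 f)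
    (ha : f a = 0) (hf' : deriv f a < 0) (hp : p < 1) :
    ∀ᶠ x in 𝓝 a, deriv f x < 0 ∧ (p - 1) * deriv f x ^ 2 + f x * deriv (deriv f) x < 0 := by
  have hcont : Continuous fun x => (p - 1) * deriv f x ^ 2 + f x * deriv (deriv f) x := by
    have := hf.continuous
    have := hf.continuous_deriv one_le_two
    have := (hf.deriv' (n := 1)).continuous_deriv le_rfl
    fun_prop
  have hbracket : (p - 1) * deriv f a ^ 2 + f a * deriv (deriv f) a < 0 := by
    rw [ha, zero_mul, add_zero]
    exact mul_neg_of_neg_of_pos (by linarith) (sq_pos_of_neg hf')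
  exact ((hf.continuous_deriv one_le_two).continuousAt.eventually_lt continuousAt_const hf').and
    (hcont.continuousAt.eventually_lt continuousAt_const hbracket)

theorem stmt8_general (q : ℝ → ℝ) (hq : ContDiff ℝ 2 q) (δ : ℝ) (hδ : 0 < δ)
    (hq2 : q 2 = 0) (hqpos : ∀ r ∈ Set.Ioo (2 - δ) 2, 0 < q r)
    (hq' : deriv q 2 < 0)
    (α : ℝ) (hα : α ∈ Set.Ioo (0 : ℝ) (1 / 2)) :
    ∃ δ' > 0, ∀ r ∈ Set.Ioo (2 - δ') 2,
      deriv (fun s => q s ^ α) r < 0 ∧ deriv (deriv (fun s => q s ^ α)) r < 0 := by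
  have hgood : Ioo (2 - δ) 2 ∩ {x | deriv q x < 0 ∧
      (α - 1) * deriv q x ^ 2 + q x * deriv (deriv q) x < 0} ∈ 𝓝[<] 2 :=
    inter_mem (Ioo_mem_nhdsLT (by linarith)) <| nhdsWithin_le_nhds <|
      hq.eventually_deriv_neg_and_bracket_neg hq2 hq' (by linarith [hα.2])
  obtain ⟨l, hl, hsub⟩ := mem_nhdsLT_iff_exists_Ioo_subset.mp hgood
  refine ⟨2 - l, sub_pos.mpr hl, fun r hr => ?_⟩
  obtain ⟨hrδ, hr', hr''⟩ := hsub (by rwa [sub_sub_cancel] at hr)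
  have hnear : ∀ᶠ y in 𝓝 r, DifferentiableAt ℝ q y ∧ 0 < q y :=
    eventually_of_mem (isOpen_Ioo.mem_nhds hrδ) fun y hy =>
      ⟨hq.differentiable two_ne_zero y, hqpos y hy⟩
  have hq'diff : Differentiable ℝ (deriv q) := (hq.deriv' (n := 1)).differentiable one_ne_zero
  exact ⟨deriv_rpow_const_neg hα.1 (hq.differentiable two_ne_zero r) (hqpos r hrδ) hr',
    deriv_deriv_rpow_const_neg hα.1 hnear (hq'diff r) hr''⟩

/-- If q is C² near r = 2 with q(2) = 0, q'(2) < 0,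
q''(2) + (1/2)q'(2) > 0, q > 0 on (2−δ, 2), and α ∈ (0, 1/2), then for r < 2
sufficiently close to 2 one has (q^α)'(r) < 0 and (q^α)''(r) < 0. -/
theorem stmt8 (q : ℝ → ℝ) (hq : ContDiff ℝ 2 q) (δ : ℝ) (hδ : 0 < δ)
    (hq2 : q 2 = 0) (hqpos : ∀ r ∈ Set.Ioo (2 - δ) 2, 0 < q r)
    (hq' : deriv q 2 < 0) (hq'' : deriv (deriv q) 2 + (1 / 2) * deriv q 2 > 0)
    (α : ℝ) (hα : α ∈ Set.Ioo (0 : ℝ) (1 / 2)) :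
    ∃ δ' > 0, ∀ r ∈ Set.Ioo (2 - δ') 2,
      deriv (fun s => q s ^ α) r < 0 ∧ deriv (deriv (fun s => q s ^ α)) r < 0 :=
  stmt8_general q hq δ hδ hq2 hqpos hq' α hα
end

section
/- Suppose u(x, t) is C⁴ on ℝⁿ × [0, T], X : [0, T] → ℝⁿ is C¹ with Ẋ(t) = −∇u(X(t), t), u_t = Δu, and Δu(X(t), t) = |∇u(X(t), t)|² for all t. Then Δ²u − 3∇Δu·∇u + 2 Σ_{i,j} u_{ij} u_i u_j = 0 along (X(t), t). -/
/-!
Along the curve, `g(t) = Δu(X t, t) - |∇u(X t, t)|²` vanishes on `[0, T]`, so its derivative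
vanishes there as well (at the endpoints because `[0, T]` is a set of unique differentiability).
Since `Ẋ = -∇u`, any jointly differentiable `Φ` satisfies `d/dt Φ(X t, t) = Φ_t - ∇u · ∇Φ`.
For each fixed `t` the heat equation `u_t = Δu` holds identically in `x`, so spatial derivatives may
be taken of it; commuting them with `∂_t` gives `(u_i)_t = (Δu)_i` and `(Δu)_t = Δ²u`. Hence
`0 = g' = Δ²u - ∇Δu · ∇u - 2 Σ_i u_i ((Δu)_i - Σ_j u_ij u_j)`, which is the claimed identity.
-/

open Set Laplacian InnerProductSpace

section Slices

variable {E F : Type*} [NormedAddCommGroup E] [NormedSpace ℝ E]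
  [NormedAddCommGroup F] [NormedSpace ℝ F]

theorem fderiv_apply_const_apply {G : Type*} [NormedAddCommGroup G] [NormedSpace ℝ G]
    {g : E → G →L[ℝ] F} {x : E} (hg : DifferentiableAt ℝ g x) (b : G) (a : E) :
    fderiv ℝ (fun y => g y b) x a = fderiv ℝ g x a b := by
  rw [fderiv_clm_apply hg (differentiableAt_const b)]
  simp

theorem fderiv_slice_apply {u : E → ℝ → F} {x : E} {t : ℝ}
    (hu : DifferentiableAt ℝ (fun p : E × ℝ => u p.1 p.2) (x, t)) (v : E) :
    fderiv ℝ (fun y => u y t) x v = fderiv ℝ (fun p : E × ℝ => u p.1 p.2) (x, t) (v, 0) := by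
  exact DFunLike.congr_fun (hu.hasFDerivAt.comp x (hasFDerivAt_prodMk_left (𝕜 := ℝ) x t)).fderiv v

theorem deriv_slice_eq {u : E → ℝ → F} {x : E} {t : ℝ}
    (hu : DifferentiableAt ℝ (fun p : E × ℝ => u p.1 p.2) (x, t)) :
    deriv (u x) t = fderiv ℝ (fun p : E × ℝ => u p.1 p.2) (x, t) (0, 1) :=
  (hu.hasFDerivAt.comp_hasDerivAt t ((hasDerivAt_const t x).prodMk (hasDerivAt_id t))).deriv

theorem hasDerivAt_along_curve {u : E → ℝ → F} {X : ℝ → E} {X' : E} {t : ℝ}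
    (hu : DifferentiableAt ℝ (fun p : E × ℝ => u p.1 p.2) (X t, t)) (hX : HasDerivAt X X' t) :
    HasDerivAt (fun s => u (X s) s)
      (fderiv ℝ (fun y => u y t) (X t) X' + deriv (u (X t)) t) t := by
  rw [fderiv_slice_apply hu, deriv_slice_eq hu, ← map_add, Prod.mk_add_mk, add_zero, zero_add]
  exact hu.hasFDerivAt.comp_hasDerivAt_of_eq t (hX.prodMk (hasDerivAt_id t)) rfl

theorem contDiff_fderiv_slice_apply {k : ℕ} {u : E → ℝ → F}
    (hu : ContDiff ℝ (k + 1) (fun p : E × ℝ => u p.1 p.2)) (v : E) :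
    ContDiff ℝ k (fun p : E × ℝ => fderiv ℝ (fun y => u y p.2) p.1 v) := by
  have hd : Differentiable ℝ (fun p : E × ℝ => u p.1 p.2) := hu.differentiable (by simp)
  simp_rw [fderiv_slice_apply (hd _)]
  exact (hu.fderiv_right le_rfl).clm_apply contDiff_const

theorem contDiff_deriv_slice {k : ℕ} {u : E → ℝ → F}
    (hu : ContDiff ℝ (k + 1) (fun p : E × ℝ => u p.1 p.2)) :
    ContDiff ℝ k (fun p : E × ℝ => deriv (u p.1) p.2) := by
  have hd : Differentiable ℝ (fun p : E × ℝ => u p.1 p.2) := hu.differentiable (by simp)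
  simp_rw [deriv_slice_eq (hd _)]
  exact (hu.fderiv_right le_rfl).clm_apply contDiff_const

theorem deriv_fderiv_slice_comm {u : E → ℝ → F}
    (hu : ContDiff ℝ 2 (fun p : E × ℝ => u p.1 p.2)) (x v : E) (t : ℝ) :
    deriv (fun s => fderiv ℝ (fun y => u y s) x v) t = fderiv ℝ (fun y => deriv (u y) t) x v := by
  set U := fun p : E × ℝ => u p.1 p.2
  have hd : Differentiable ℝ U := hu.differentiable (by simp)
  have hd' : Differentiable ℝ (fderiv ℝ U) :=
    (hu.fderiv_right (m := 1) le_rfl).differentiable (by simp)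
  have hdv (w : E × ℝ) : Differentiable ℝ (fun p => fderiv ℝ U p w) :=
    fun p => (hd' p).clm_apply (differentiableAt_const w)
  simp_rw [fderiv_slice_apply (hd _), deriv_slice_eq (hd _)]
  rw [deriv_slice_eq (u := fun y s => fderiv ℝ U (y, s) (v, 0)) (hdv _ _),
    fderiv_slice_apply (u := fun y s => fderiv ℝ U (y, s) (0, 1)) (hdv _ _),
    fderiv_apply_const_apply (hd' _), fderiv_apply_const_apply (hd' _)]
  -- both sides are `D²U (x, t)` evaluated on `(v, 0)` and `(0, 1)`, in the two orders
  exact (hu.contDiffAt.isSymmSndFDerivAt (by simp) _ _).symm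

end Slices

section IteratedFDeriv

variable {E F : Type*} [NormedAddCommGroup E] [NormedSpace ℝ E]
  [NormedAddCommGroup F] [NormedSpace ℝ F]

theorem fderiv_fderiv_apply_eq_iteratedFDeriv {f : E → F} {x : E}
    (hf : DifferentiableAt ℝ (fderiv ℝ f) x) (a b : E) :
    fderiv ℝ (fun y => fderiv ℝ f y b) x a = iteratedFDeriv ℝ 2 f x ![a, b] := by
  rw [iteratedFDeriv_two_apply, fderiv_apply_const_apply hf]
  rfl

theorem fderiv_iteratedFDeriv_apply_eq_cons {k : ℕ} {f : E → F} (hf : ContDiff ℝ (k + 1) f)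
    (x a : E) (m : Fin k → E) :
    fderiv ℝ (fun y => iteratedFDeriv ℝ k f y m) x a =
      iteratedFDeriv ℝ (k + 1) f x (Fin.cons a m) :=
  ((hf.differentiable_iteratedFDeriv (m := k) (by exact_mod_cast k.lt_succ_self) x)
    |>.iteratedFDeriv_succ_apply_left' (m := Fin.cons a m)).symm

theorem iteratedFDeriv_two_iteratedFDeriv_two {f : E → F} (hf : ContDiff ℝ 4 f)
    (x a b c d : E) :
    iteratedFDeriv ℝ 2 (fun y => iteratedFDeriv ℝ 2 f y ![c, d]) x ![a, b] =
      iteratedFDeriv ℝ 4 f x ![a, b, c, d] := by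
  have hC2 : ContDiff ℝ 2 (fun y => iteratedFDeriv ℝ 2 f y ![c, d]) :=
    (ContinuousMultilinearMap.apply ℝ (fun _ : Fin 2 => E) F ![c, d]).contDiff.comp
      (hf.iteratedFDeriv_right (m := 2) (i := 2) (by norm_num))
  have hd : Differentiable ℝ (fderiv ℝ (fun y => iteratedFDeriv ℝ 2 f y ![c, d])) :=
    (hC2.fderiv_right (m := 1) le_rfl).differentiable (by simp)
  rw [← fderiv_fderiv_apply_eq_iteratedFDeriv (hd x)]
  simp_rw [fderiv_iteratedFDeriv_apply_eq_cons (k := 2) (hf.of_le (by norm_num))]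
  exact fderiv_iteratedFDeriv_apply_eq_cons (k := 3) hf x a _

end IteratedFDeriv

section Laplacian

variable {ι E F : Type*} [Fintype ι] [NormedAddCommGroup E] [InnerProductSpace ℝ E]
  [FiniteDimensional ℝ E] [NormedAddCommGroup F] [NormedSpace ℝ F]

theorem laplacian_eq_sum_fderiv_fderiv (b : OrthonormalBasis ι ℝ E) {f : E → F}
    (hf : ContDiff ℝ 2 f) (x : E) :
    Δ f x = ∑ i, fderiv ℝ (fun y => fderiv ℝ f y (b i)) x (b i) := by
  have hd : Differentiable ℝ (fderiv ℝ f) :=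
    (hf.fderiv_right (m := 1) le_rfl).differentiable (by simp)
  simp only [laplacian_eq_iteratedFDeriv_orthonormalBasis f b,
    fderiv_fderiv_apply_eq_iteratedFDeriv (hd x)]

theorem laplacian_laplacian_eq_sum_iteratedFDeriv (b : OrthonormalBasis ι ℝ E) {f : E → F}
    (hf : ContDiff ℝ 4 f) (x : E) :
    Δ (Δ f) x = ∑ i, ∑ j, iteratedFDeriv ℝ 4 f x ![b i, b i, b j, b j] := by
  have hC2 (m : Fin 2 → E) : ContDiff ℝ 2 (fun y => iteratedFDeriv ℝ 2 f y m) :=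
    (ContinuousMultilinearMap.apply ℝ (fun _ : Fin 2 => E) F m).contDiff.comp
      (hf.iteratedFDeriv_right (m := 2) (i := 2) (by norm_num))
  rw [laplacian_eq_iteratedFDeriv_orthonormalBasis f b,
    laplacian_eq_iteratedFDeriv_orthonormalBasis _ b]
  refine Finset.sum_congr rfl fun i _ => ?_
  rw [iteratedFDeriv_fun_sum_apply fun j _ => (hC2 _).contDiffAt, sum_apply]
  exact Finset.sum_congr rfl fun j _ => iteratedFDeriv_two_iteratedFDeriv_two hf x _ _ _ _

theorem contDiff_laplacian_slice (b : OrthonormalBasis ι ℝ E) {k : ℕ} {u : E → ℝ → F}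
    (hu : ContDiff ℝ (k + 2) (fun p : E × ℝ => u p.1 p.2)) :
    ContDiff ℝ k (fun p : E × ℝ => Δ (fun y => u y p.2) p.1) := by
  have hslice (t : ℝ) : ContDiff ℝ 2 (fun y => u y t) :=
    (hu.comp (contDiff_id.prodMk contDiff_const)).of_le (by simp)
  simp_rw [laplacian_eq_sum_fderiv_fderiv b (hslice _)]
  refine ContDiff.sum fun i _ => contDiff_fderiv_slice_apply
    (u := fun x t => fderiv ℝ (fun y => u y t) x (b i)) ?_ _
  exact contDiff_fderiv_slice_apply (hu.of_le (by norm_num [add_assoc])) _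

theorem deriv_laplacian_slice_comm (b : OrthonormalBasis ι ℝ E) {u : E → ℝ → F}
    (hu : ContDiff ℝ 3 (fun p : E × ℝ => u p.1 p.2)) (x : E) (t : ℝ) :
    deriv (fun s => Δ (fun y => u y s) x) t = Δ (fun y => deriv (u y) t) x := by
  have hu1 (i : ι) :
      ContDiff ℝ 2 (fun p : E × ℝ => fderiv ℝ (fun y => u y p.2) p.1 (b i)) :=
    contDiff_fderiv_slice_apply (k := 2) hu _
  have hu2 (i : ι) : ContDiff ℝ 1
      (fun p : E × ℝ => fderiv ℝ (fun z => fderiv ℝ (fun y => u y p.2) z (b i)) p.1 (b i)) :=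
    contDiff_fderiv_slice_apply (u := fun x t => fderiv ℝ (fun y => u y t) x (b i)) (hu1 i) _
  have hslice (s : ℝ) : ContDiff ℝ 2 (fun y => u y s) :=
    (hu.comp (contDiff_id.prodMk contDiff_const)).of_le (by norm_num)
  have hdt : ContDiff ℝ 2 (fun y => deriv (u y) t) :=
    (contDiff_deriv_slice (k := 2) hu).comp (contDiff_id.prodMk contDiff_const)
  have hdiff (i : ι) : DifferentiableAt ℝ
      (fun s => fderiv ℝ (fun z => fderiv ℝ (fun y => u y s) z (b i)) x (b i)) t :=
    ((hu2 i).comp (contDiff_const.prodMk contDiff_id)).differentiable one_ne_zero t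
  rw [laplacian_eq_sum_fderiv_fderiv b hdt]
  simp_rw [laplacian_eq_sum_fderiv_fderiv b (hslice _)]
  rw [deriv_fun_sum fun i _ => hdiff i]
  refine Finset.sum_congr rfl fun i _ => ?_
  rw [deriv_fderiv_slice_comm (u := fun x t => fderiv ℝ (fun y => u y t) x (b i)) (hu1 i)]
  simp_rw [deriv_fderiv_slice_comm (hu.of_le (by norm_num))]

end Laplacian

theorem HasDerivAt.eq_zero_of_eqOn_Icc {F : Type*} [NormedAddCommGroup F] [NormedSpace ℝ F]
    {f : ℝ → F} {f' : F} {a b t : ℝ} (hab : a < b) (ht : t ∈ Icc a b) (hf : HasDerivAt f f' t)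
    (h0 : EqOn f 0 (Icc a b)) : f' = 0 :=
  (uniqueDiffOn_Icc hab t ht).eq_deriv _ hf.hasDerivWithinAt
    ((hasDerivWithinAt_const t _ 0).congr_of_mem h0 ht)

theorem sub_sum_sub_sum_two_mul_eq {ι : Type*} [Fintype ι] (D : ℝ) (A C : ι → ℝ)
    (B : ι → ι → ℝ) :
    D - ∑ j, A j * C j - ∑ i, 2 * A i * (C i - ∑ j, A j * B j i) =
      D - 3 * ∑ i, C i * A i + 2 * ∑ i, ∑ j, B i j * A i * A j := by
  have hAC : ∑ j, A j * C j = ∑ i, C i * A i := Finset.sum_congr rfl fun _ _ => mul_comm _ _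
  have hexpand : ∑ i, 2 * A i * (C i - ∑ j, A j * B j i) =
      2 * ∑ i, C i * A i - 2 * ∑ i, A i * ∑ j, A j * B j i := by
    rw [Finset.mul_sum, Finset.mul_sum, ← Finset.sum_sub_distrib]
    exact Finset.sum_congr rfl fun i _ => by ring
  have hswap : ∑ i, A i * ∑ j, A j * B j i = ∑ i, ∑ j, B i j * A i * A j := by
    simp_rw [Finset.mul_sum]
    rw [Finset.sum_comm]
    exact Finset.sum_congr rfl fun i _ => Finset.sum_congr rfl fun j _ => by ring
  rw [hAC, hexpand, hswap]
  ring

section GradientFlow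

variable {ι E : Type*} [Fintype ι] [NormedAddCommGroup E] [InnerProductSpace ℝ E]

theorem map_gradient_eq_sum [CompleteSpace E] (b : OrthonormalBasis ι ℝ E) (f : E → ℝ) (x : E)
    (ℓ : E →L[ℝ] ℝ) :
    ℓ (gradient f x) = ∑ i, fderiv ℝ f x (b i) * ℓ (b i) := by
  conv_lhs => rw [← b.sum_repr' (gradient f x)]
  simp [inner_gradient_right]

theorem hasDerivAt_along_gradient_flow [CompleteSpace E] (b : OrthonormalBasis ι ℝ E)
    {u Φ : E → ℝ → ℝ} {X : ℝ → E} {t : ℝ}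
    (hΦ : DifferentiableAt ℝ (fun p : E × ℝ => Φ p.1 p.2) (X t, t))
    (hX : HasDerivAt X (-gradient (fun y => u y t) (X t)) t) :
    HasDerivAt (fun s => Φ (X s) s) (deriv (Φ (X t)) t -
      ∑ i, fderiv ℝ (fun y => u y t) (X t) (b i) * fderiv ℝ (fun y => Φ y t) (X t) (b i)) t := by
  refine (hasDerivAt_along_curve hΦ hX).congr_deriv ?_
  rw [map_neg, map_gradient_eq_sum b]
  ring

variable [FiniteDimensional ℝ E] (b : OrthonormalBasis ι ℝ E) {u : E → ℝ → ℝ}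
  (hu : ContDiff ℝ 3 (fun p : E × ℝ => u p.1 p.2)) {X : ℝ → E} {t : ℝ}
  (hX : HasDerivAt X (-gradient (fun y => u y t) (X t)) t)
  (hheat : ∀ x, deriv (u x) t = Δ (fun y => u y t) x)
include hu hX hheat

theorem hasDerivAt_fderiv_along_heat_gradient_flow (i : ι) :
    HasDerivAt (fun s => fderiv ℝ (fun y => u y s) (X s) (b i))
      (fderiv ℝ (Δ (fun y => u y t)) (X t) (b i) - ∑ j, fderiv ℝ (fun y => u y t) (X t) (b j) *
        iteratedFDeriv ℝ 2 (fun y => u y t) (X t) ![b j, b i]) t := by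
  have hΦ : ContDiff ℝ 2 (fun p : E × ℝ => fderiv ℝ (fun y => u y p.2) p.1 (b i)) :=
    contDiff_fderiv_slice_apply (k := 2) hu _
  have hf : Differentiable ℝ (fderiv ℝ (fun y => u y t)) :=
    ((hu.comp (contDiff_id.prodMk contDiff_const)).fderiv_right (m := 1) (by norm_num))
      |>.differentiable (by simp)
  have h := hasDerivAt_along_gradient_flow b
    (Φ := fun x s => fderiv ℝ (fun y => u y s) x (b i)) (hΦ.differentiable (by simp) _) hX
  simp_rw [fderiv_fderiv_apply_eq_iteratedFDeriv (hf _)] at h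
  rwa [deriv_fderiv_slice_comm (hu.of_le (by norm_num)), funext hheat] at h

theorem hasDerivAt_laplacian_along_heat_gradient_flow :
    HasDerivAt (fun s => Δ (fun y => u y s) (X s))
      (Δ (Δ (fun y => u y t)) (X t) - ∑ j, fderiv ℝ (fun y => u y t) (X t) (b j) *
        fderiv ℝ (Δ (fun y => u y t)) (X t) (b j)) t := by
  have hΦ : ContDiff ℝ 1 (fun p : E × ℝ => Δ (fun y => u y p.2) p.1) :=
    contDiff_laplacian_slice b (k := 1) hu
  have h := hasDerivAt_along_gradient_flow b
    (Φ := fun x s => Δ (fun y => u y s) x) (hΦ.differentiable (by simp) _) hX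
  rwa [deriv_laplacian_slice_comm b hu, funext hheat] at h

end GradientFlow

theorem stefan_second_compatibility {ι E : Type*} [Fintype ι] [NormedAddCommGroup E]
    [InnerProductSpace ℝ E] [FiniteDimensional ℝ E] (b : OrthonormalBasis ι ℝ E) {T : ℝ}
    (hT : 0 < T) {u : E → ℝ → ℝ} (hu : ContDiff ℝ 3 (fun p : E × ℝ => u p.1 p.2)) {X : ℝ → E}
    (hcomp : ∀ t ∈ Icc 0 T,
      Δ (fun y => u y t) (X t) = ∑ i, fderiv ℝ (fun y => u y t) (X t) (b i) ^ 2)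
    {t : ℝ} (ht : t ∈ Icc 0 T) (hX : HasDerivAt X (-gradient (fun y => u y t) (X t)) t)
    (hheat : ∀ x, deriv (u x) t = Δ (fun y => u y t) x) :
    Δ (Δ (fun y => u y t)) (X t)
      - 3 * ∑ i, fderiv ℝ (Δ (fun y => u y t)) (X t) (b i) * fderiv ℝ (fun y => u y t) (X t) (b i)
      + 2 * ∑ i, ∑ j, iteratedFDeriv ℝ 2 (fun y => u y t) (X t) ![b i, b j]
          * fderiv ℝ (fun y => u y t) (X t) (b i) * fderiv ℝ (fun y => u y t) (X t) (b j) = 0 := by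
  have hlap := hasDerivAt_laplacian_along_heat_gradient_flow b hu hX hheat
  have hpartial := hasDerivAt_fderiv_along_heat_gradient_flow b hu hX hheat
  have hzero := (hlap.sub (HasDerivAt.fun_sum (u := Finset.univ) fun i _ => (hpartial i).pow 2))
    |>.eq_zero_of_eqOn_Icc hT ht fun s hs => sub_eq_zero.2 (hcomp s hs)
  simp only [Nat.reduceSub, pow_one, Nat.cast_ofNat] at hzero
  rwa [sub_sum_sub_sum_two_mul_eq] at hzero

/-- Second compatibility condition for the Stefan problem: if u is C⁴,
Ẋ(t) = −∇u(X(t), t), u_t = Δu, and Δu = |∇u|² along (X(t), t), then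
Δ²u − 3∇Δu·∇u + 2 Σ_{i,j} u_{ij} u_i u_j = 0 along (X(t), t). -/
theorem stmt11 (n : ℕ) (T : ℝ) (hT : 0 < T)
    (u : EuclideanSpace ℝ (Fin n) → ℝ → ℝ)
    (hu : ContDiff ℝ 4 (fun p : EuclideanSpace ℝ (Fin n) × ℝ => u p.1 p.2))
    (X : ℝ → EuclideanSpace ℝ (Fin n)) (hX : ContDiff ℝ 1 X)
    (hstefan : ∀ t ∈ Set.Icc 0 T, deriv X t = -gradient (fun x => u x t) (X t))
    (hheat : ∀ (x : EuclideanSpace ℝ (Fin n)), ∀ t ∈ Set.Icc 0 T,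
      deriv (u x) t = ∑ i : Fin n,
        iteratedFDeriv ℝ 2 (fun x' => u x' t) x
          ![EuclideanSpace.single i 1, EuclideanSpace.single i 1])
    (hcomp1 : ∀ t ∈ Set.Icc 0 T,
      (∑ i : Fin n, iteratedFDeriv ℝ 2 (fun x' => u x' t) (X t)
          ![EuclideanSpace.single i 1, EuclideanSpace.single i 1])
        = ∑ i : Fin n,
            (fderiv ℝ (fun x' => u x' t) (X t) (EuclideanSpace.single i 1)) ^ 2) :
    ∀ t ∈ Set.Icc 0 T,
      (∑ i : Fin n, ∑ j : Fin n, iteratedFDeriv ℝ 4 (fun x' => u x' t) (X t)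
          ![EuclideanSpace.single i 1, EuclideanSpace.single i 1,
            EuclideanSpace.single j 1, EuclideanSpace.single j 1])
      - 3 * (∑ i : Fin n,
          fderiv ℝ (fun x' => ∑ j : Fin n, iteratedFDeriv ℝ 2 (fun x'' => u x'' t) x'
              ![EuclideanSpace.single j 1, EuclideanSpace.single j 1]) (X t)
            (EuclideanSpace.single i 1)
          * fderiv ℝ (fun x' => u x' t) (X t) (EuclideanSpace.single i 1))
      + 2 * (∑ i : Fin n, ∑ j : Fin n,
          iteratedFDeriv ℝ 2 (fun x' => u x' t) (X t)
              ![EuclideanSpace.single i 1, EuclideanSpace.single j 1]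
            * fderiv ℝ (fun x' => u x' t) (X t) (EuclideanSpace.single i 1)
            * fderiv ℝ (fun x' => u x' t) (X t) (EuclideanSpace.single j 1)) = 0 := by
  intro t ht
  let b := EuclideanSpace.basisFun (Fin n) ℝ
  have hb (i : Fin n) : b i = EuclideanSpace.single i 1 := EuclideanSpace.basisFun_apply _ _ i
  have hlap (f : EuclideanSpace ℝ (Fin n) → ℝ) : Δ f = fun x =>
      ∑ i, iteratedFDeriv ℝ 2 f x ![EuclideanSpace.single i 1, EuclideanSpace.single i 1] := by
    simpa only [hb] using laplacian_eq_iteratedFDeriv_orthonormalBasis f b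
  have key := stefan_second_compatibility b hT (hu.of_le (by norm_num))
    (fun s hs => by simpa only [hlap, hb] using hcomp1 s hs) ht
    (hstefan t ht ▸ (hX.differentiable one_ne_zero t).hasDerivAt)
    (fun x => by rw [hlap]; exact hheat x t ht)
  have hslice : ContDiff ℝ 4 (fun y => u y t) := hu.comp (contDiff_id.prodMk contDiff_const)
  rw [laplacian_laplacian_eq_sum_iteratedFDeriv b hslice] at key
  simpa only [hlap, hb] using key
end
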